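/- Let R be a commutative ring that is also a bialgebra over ℤ with comultiplication Δ : R → R ⊗ R, and let S ⊆ R be a multiplicative subset such that for every s ∈ S, Δ(s) = s ⊗ s (i.e. S consists of grouplike elements). Let M₁ and M₂ be R-modules, and equip M₁ ⊗_ℤ M₂ with the diagonal R-action via Δ. Then the canonical map S⁻¹(M₁ ⊗_ℤ M₂) → (S⁻¹M₁) ⊗_ℤ (S⁻¹M₂) is an isomorphism of abelian groups, with inverse sending (x₁/s₁) ⊗ (x₂/s₂) to (1/(s₁s₂))·(s₂x₁ ⊗ s₁x₂). -/

import Mathlib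

open TensorProduct

/-- The diagonal `R`-module structure on `M₁ ⊗[ℤ] M₂` for a `ℤ`-bialgebra `R`, defined by
letting `r ∈ R` act through its comultiplication `Δ(r) ∈ R ⊗[ℤ] R`, acting componentwise. -/
noncomputable def diagModule (R : Type*) [CommRing R] [Bialgebra ℤ R]
    (M₁ M₂ : Type*) [AddCommGroup M₁] [Module R M₁] [AddCommGroup M₂] [Module R M₂] :
    Module R (M₁ ⊗[ℤ] M₂) := by
  haveI t1 : @IsScalarTower ℤ R M₁ Algebra.toSMul _ _ :=
    IsScalarTower.of_algebraMap_smul fun z m => by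
      rw [eq_intCast, Int.cast_smul_eq_zsmul]
  haveI t2 : @IsScalarTower ℤ R M₂ Algebra.toSMul _ _ :=
    IsScalarTower.of_algebraMap_smul fun z m => by
      rw [eq_intCast, Int.cast_smul_eq_zsmul]
  haveI t3 :=
    @IsScalarTower.mk ℤ ℤ R (@Algebra.toSMul ℤ ℤ _ _ (Algebra.id ℤ)) Algebra.toSMul
      Algebra.toSMul (fun x y z => by simp [Algebra.smul_def, mul_assoc])
  exact Module.compHom (M₁ ⊗[ℤ] M₂)
    (((Module.endTensorEndAlgHom (R := ℤ) (S := ℤ) (A := ℤ) (M := M₁) (N := M₂)).comp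
      ((Algebra.TensorProduct.map (Algebra.lsmul ℤ ℤ M₁ (A := R))
          (Algebra.lsmul ℤ ℤ M₂ (A := R))).comp
        (Bialgebra.comulAlgHom ℤ R))).toRingHom)

section Aux

variable {R : Type*} [CommRing R] [Bialgebra ℤ R]
  {M₁ M₂ : Type*} [AddCommGroup M₁] [Module R M₁] [AddCommGroup M₂] [Module R M₂]

/-- The `DistribMulAction` underlying `diagModule`. -/
noncomputable abbrev diagDMA (R : Type*) [CommRing R] [Bialgebra ℤ R]
    (M₁ M₂ : Type*) [AddCommGroup M₁] [Module R M₁] [AddCommGroup M₂] [Module R M₂] :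
    DistribMulAction R (M₁ ⊗[ℤ] M₂) :=
  @Module.toDistribMulAction _ _ _ _ (diagModule R M₁ M₂)

attribute [local instance] diagDMA

/-- The ring hom underlying `diagModule`. -/
noncomputable def g0 (R : Type*) [CommRing R] [Bialgebra ℤ R]
    (M₁ M₂ : Type*) [AddCommGroup M₁] [Module R M₁] [AddCommGroup M₂] [Module R M₂] :
    R →+* Module.End ℤ (M₁ ⊗[ℤ] M₂) := by
  haveI t1 : @IsScalarTower ℤ R M₁ Algebra.toSMul _ _ :=
    IsScalarTower.of_algebraMap_smul fun z m => by
      rw [eq_intCast, Int.cast_smul_eq_zsmul]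
  haveI t2 : @IsScalarTower ℤ R M₂ Algebra.toSMul _ _ :=
    IsScalarTower.of_algebraMap_smul fun z m => by
      rw [eq_intCast, Int.cast_smul_eq_zsmul]
  haveI t3 :=
    @IsScalarTower.mk ℤ ℤ R (@Algebra.toSMul ℤ ℤ _ _ (Algebra.id ℤ)) Algebra.toSMul
      Algebra.toSMul (fun x y z => by simp [Algebra.smul_def, mul_assoc])
  exact (((Module.endTensorEndAlgHom (R := ℤ) (S := ℤ) (A := ℤ) (M := M₁) (N := M₂)).comp
      ((Algebra.TensorProduct.map (Algebra.lsmul ℤ ℤ M₁ (A := R))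
          (Algebra.lsmul ℤ ℤ M₂ (A := R))).comp
        (Bialgebra.comulAlgHom ℤ R))).toRingHom)

theorem g0_tmul (r : R) (h : Bialgebra.comulAlgHom ℤ R r =
      @TensorProduct.tmul ℤ _ R R _ _ Algebra.toModule Algebra.toModule r r)
    (x₁ : M₁) (x₂ : M₂) :
    g0 R M₁ M₂ r (x₁ ⊗ₜ[ℤ] x₂) = (r • x₁) ⊗ₜ[ℤ] (r • x₂) := by
  haveI t1 : @IsScalarTower ℤ R M₁ Algebra.toSMul _ _ :=
    IsScalarTower.of_algebraMap_smul fun z m => by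
      rw [eq_intCast, Int.cast_smul_eq_zsmul]
  haveI t2 : @IsScalarTower ℤ R M₂ Algebra.toSMul _ _ :=
    IsScalarTower.of_algebraMap_smul fun z m => by
      rw [eq_intCast, Int.cast_smul_eq_zsmul]
  haveI t3 :=
    @IsScalarTower.mk ℤ ℤ R (@Algebra.toSMul ℤ ℤ _ _ (Algebra.id ℤ)) Algebra.toSMul
      Algebra.toSMul (fun x y z => by simp [Algebra.smul_def, mul_assoc])
  show ((Module.endTensorEndAlgHom (R := ℤ) (S := ℤ) (A := ℤ) (M := M₁) (N := M₂))
      ((Algebra.TensorProduct.map (Algebra.lsmul ℤ ℤ M₁ (A := R))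
          (Algebra.lsmul ℤ ℤ M₂ (A := R)))
        (Bialgebra.comulAlgHom ℤ R r))) (x₁ ⊗ₜ[ℤ] x₂) = (r • x₁) ⊗ₜ[ℤ] (r • x₂)
  rw [h]
  simp [Module.endTensorEndAlgHom_apply]

variable {S : Submonoid R}

/-- `hS` predicate abbreviation. -/
def Grouplike (S : Submonoid R) : Prop :=
  ∀ s ∈ S, Bialgebra.comulAlgHom ℤ R s =
    @TensorProduct.tmul ℤ _ R R _ _ Algebra.toModule Algebra.toModule s s

theorem g0_coe_tmul (hS : Grouplike S) (t : S) (x₁ : M₁) (x₂ : M₂) :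
    g0 R M₁ M₂ (t : R) (x₁ ⊗ₜ[ℤ] x₂) = ((t : R) • x₁) ⊗ₜ[ℤ] ((t : R) • x₂) :=
  g0_tmul _ (hS _ t.2) _ _

theorem g0_coe_mul_apply (a b : S) (z : M₁ ⊗[ℤ] M₂) :
    g0 R M₁ M₂ ((a * b : S) : R) z = g0 R M₁ M₂ (a : R) (g0 R M₁ M₂ (b : R) z) := by
  rw [Submonoid.coe_mul, map_mul]; rfl

/-- `x ↦ mk x s` as a `ℤ`-linear map. -/
noncomputable def lmk {M : Type*} [AddCommGroup M] [Module R M] (s : S) :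
    M →ₗ[ℤ] LocalizedModule S M :=
  (AddMonoidHom.mk' (fun x => LocalizedModule.mk x s) (fun x y => by
    rw [LocalizedModule.mk_add_mk, ← smul_add, LocalizedModule.mk_cancel_common_left])).toIntLinearMap

theorem lmk_apply {M : Type*} [AddCommGroup M] [Module R M] (s : S) (x : M) :
    lmk s x = LocalizedModule.mk x s := rfl

/-- forward map on numerators, for a fixed denominator. -/
noncomputable def phi (s : S) :
    (M₁ ⊗[ℤ] M₂) →ₗ[ℤ] (LocalizedModule S M₁ ⊗[ℤ] LocalizedModule S M₂) :=
  TensorProduct.map (lmk s) (lmk s)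

theorem phi_tmul (s : S) (x₁ : M₁) (x₂ : M₂) :
    phi (S := S) s (x₁ ⊗ₜ[ℤ] x₂) =
      LocalizedModule.mk x₁ s ⊗ₜ[ℤ] LocalizedModule.mk x₂ s := rfl

theorem phi_g0 (hS : Grouplike S) (c s : S) (m : M₁ ⊗[ℤ] M₂) :
    phi (S := S) (c * s) (g0 R M₁ M₂ (c : R) m) = phi s m := by
  induction m using TensorProduct.induction_on with
  | zero => simp
  | tmul x y =>
      rw [g0_coe_tmul hS, phi_tmul, phi_tmul,
        ← Submonoid.smul_def, ← Submonoid.smul_def,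
        LocalizedModule.mk_cancel_common_left, LocalizedModule.mk_cancel_common_left]
  | add a b ha hb => rw [map_add, map_add, map_add, ha, hb]

/-- The forward map. -/
noncomputable def fwd (hS : Grouplike S) :
    (@LocalizedModule R _ S (M₁ ⊗[ℤ] M₂) _ (diagModule R M₁ M₂)) →
    (LocalizedModule S M₁ ⊗[ℤ] LocalizedModule S M₂) := by
  letI : Module R (M₁ ⊗[ℤ] M₂) := diagModule R M₁ M₂
  exact fun z => LocalizedModule.liftOn z (fun p => phi p.2 p.1) (by
    rintro ⟨m, s⟩ ⟨m', s'⟩ ⟨u, hu⟩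
    have hu2 : g0 R M₁ M₂ (u : R) (g0 R M₁ M₂ ((s' : S) : R) m) =
        g0 R M₁ M₂ (u : R) (g0 R M₁ M₂ ((s : S) : R) m') := hu
    show phi s m = phi s' m'
    calc phi (S := S) s m
        = phi ((u * s') * s) (g0 R M₁ M₂ ((u * s' : S) : R) m) := (phi_g0 hS (u * s') s m).symm
      _ = phi ((u * s') * s) (g0 R M₁ M₂ (u : R) (g0 R M₁ M₂ ((s' : S) : R) m)) := by
            rw [g0_coe_mul_apply]
      _ = phi ((u * s) * s') (g0 R M₁ M₂ (u : R) (g0 R M₁ M₂ ((s : S) : R) m')) := by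
            rw [hu2, mul_right_comm]
      _ = phi ((u * s) * s') (g0 R M₁ M₂ ((u * s : S) : R) m') := by rw [g0_coe_mul_apply]
      _ = phi s' m' := phi_g0 hS (u * s) s' m')

theorem fwd_mk (hS : Grouplike S) (m : M₁ ⊗[ℤ] M₂) (s : S) :
    fwd hS (letI : Module R (M₁ ⊗[ℤ] M₂) := diagModule R M₁ M₂
      LocalizedModule.mk m s) = phi s m := rfl

end Aux

section Bwd

variable {R : Type*} [CommRing R] [Bialgebra ℤ R] {S : Submonoid R}
  {M₁ M₂ : Type*} [AddCommGroup M₁] [Module R M₁] [AddCommGroup M₂] [Module R M₂]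

attribute [local instance] diagDMA

theorem tmul_congr {c c' d d' : R} (y : M₁) (x : M₂) (h1 : c = c') (h2 : d = d') :
    (c • y) ⊗ₜ[ℤ] (d • x) = (c' • y) ⊗ₜ[ℤ] (d' • x) := by rw [h1, h2]

/-- The backward map on representatives. -/
noncomputable def bwdCore (hS : Grouplike S) :
    LocalizedModule S M₁ → LocalizedModule S M₂ →
    (@LocalizedModule R _ S (M₁ ⊗[ℤ] M₂) _ (diagModule R M₁ M₂)) := by
  letI : Module R (M₁ ⊗[ℤ] M₂) := diagModule R M₁ M₂
  refine fun a b => Quotient.liftOn₂ a b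
    (fun p q => LocalizedModule.mk (((q.2 : R) • p.1) ⊗ₜ[ℤ] ((p.2 : R) • q.1)) (p.2 * q.2)) ?_
  rintro ⟨x₁, s₁⟩ ⟨x₂, s₂⟩ ⟨x₁', s₁'⟩ ⟨x₂', s₂'⟩ hu0 hv0
  obtain ⟨u, hu⟩ := LocalizedModule.mk_eq.mp
    (Quotient.sound hu0 : LocalizedModule.mk x₁ s₁ = LocalizedModule.mk x₁' s₁')
  obtain ⟨v, hv⟩ := LocalizedModule.mk_eq.mp
    (Quotient.sound hv0 : LocalizedModule.mk x₂ s₂ = LocalizedModule.mk x₂' s₂')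
  have hu' : ((u:R)*(s₁':R)) • x₁ = ((u:R)*(s₁:R)) • x₁' := by
    have h0 : (u:R) • ((s₁':R) • x₁) = (u:R) • ((s₁:R) • x₁') := hu
    simpa [mul_smul] using h0
  have hv' : ((v:R)*(s₂':R)) • x₂ = ((v:R)*(s₂:R)) • x₂' := by
    have h0 : (v:R) • ((s₂':R) • x₂) = (v:R) • ((s₂:R) • x₂') := hv
    simpa [mul_smul] using h0
  show LocalizedModule.mk (((s₂:R) • x₁) ⊗ₜ[ℤ] ((s₁:R) • x₂)) (s₁*s₂) =
    LocalizedModule.mk (((s₂':R) • x₁') ⊗ₜ[ℤ] ((s₁':R) • x₂')) (s₁'*s₂')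
  rw [LocalizedModule.mk_eq]
  refine ⟨u*v, ?_⟩
  have h1 : (((u*v : S):R)) • ((((s₁'*s₂' : S):R)) • ((s₂:R) • x₁)) =
      (((u*v : S):R)) • ((((s₁*s₂ : S):R)) • ((s₂':R) • x₁')) := by
    simp only [Submonoid.coe_mul, smul_smul]
    rw [show (u:R)*(v:R)*((s₁':R)*(s₂':R)*(s₂:R)) = (v:R)*(s₂':R)*(s₂:R)*((u:R)*(s₁':R)) by ring,
      show (u:R)*(v:R)*((s₁:R)*(s₂:R)*(s₂':R)) = (v:R)*(s₂':R)*(s₂:R)*((u:R)*(s₁:R)) by ring,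
      mul_smul ((v:R)*(s₂':R)*(s₂:R)) ((u:R)*(s₁':R)) x₁,
      mul_smul ((v:R)*(s₂':R)*(s₂:R)) ((u:R)*(s₁:R)) x₁', hu']
  have h2 : (((u*v : S):R)) • ((((s₁'*s₂' : S):R)) • ((s₁:R) • x₂)) =
      (((u*v : S):R)) • ((((s₁*s₂ : S):R)) • ((s₁':R) • x₂')) := by
    simp only [Submonoid.coe_mul, smul_smul]
    rw [show (u:R)*(v:R)*((s₁':R)*(s₂':R)*(s₁:R)) = (u:R)*(s₁':R)*(s₁:R)*((v:R)*(s₂':R)) by ring,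
      show (u:R)*(v:R)*((s₁:R)*(s₂:R)*(s₁':R)) = (u:R)*(s₁':R)*(s₁:R)*((v:R)*(s₂:R)) by ring,
      mul_smul ((u:R)*(s₁':R)*(s₁:R)) ((v:R)*(s₂':R)) x₂,
      mul_smul ((u:R)*(s₁':R)*(s₁:R)) ((v:R)*(s₂:R)) x₂', hv']
  have main : g0 R M₁ M₂ ((u*v : S) : R) (g0 R M₁ M₂ ((s₁'*s₂' : S) : R)
        (((s₂:R) • x₁) ⊗ₜ[ℤ] ((s₁:R) • x₂))) =
      g0 R M₁ M₂ ((u*v : S) : R) (g0 R M₁ M₂ ((s₁*s₂ : S) : R)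
        (((s₂':R) • x₁') ⊗ₜ[ℤ] ((s₁':R) • x₂'))) := by
    rw [g0_coe_tmul hS, g0_coe_tmul hS, g0_coe_tmul hS, g0_coe_tmul hS, h1, h2]
  exact main

theorem bwdCore_mk (hS : Grouplike S) (x₁ : M₁) (s₁ : S) (x₂ : M₂) (s₂ : S) :
    bwdCore hS (LocalizedModule.mk x₁ s₁) (LocalizedModule.mk x₂ s₂) =
    (letI : Module R (M₁ ⊗[ℤ] M₂) := diagModule R M₁ M₂
     LocalizedModule.mk (((s₂:R) • x₁) ⊗ₜ[ℤ] ((s₁:R) • x₂)) (s₁*s₂)) := rfl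

theorem bwdCore_add_left (hS : Grouplike S) (a a' : LocalizedModule S M₁)
    (b : LocalizedModule S M₂) :
    bwdCore hS (a + a') b = bwdCore hS a b + bwdCore hS a' b := by
  letI : Module R (M₁ ⊗[ℤ] M₂) := diagModule R M₁ M₂
  induction a, a' using LocalizedModule.induction_on₂ with
  | _ y y' t t' =>
  induction b using LocalizedModule.induction_on with
  | _ x₂ s₂ =>
  rw [LocalizedModule.mk_add_mk, bwdCore_mk, bwdCore_mk, bwdCore_mk,
    LocalizedModule.mk_add_mk, LocalizedModule.mk_eq]
  refine ⟨1, ?_⟩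
  have hg := fun (c : S) (z₁ : M₁) (z₂ : M₂) => g0_coe_tmul (M₁ := M₁) (M₂ := M₂) hS c z₁ z₂
  have main : g0 R M₁ M₂ ((1 : S) : R) (g0 R M₁ M₂ (((t*s₂)*(t'*s₂) : S) : R)
        (((s₂:R) • ((t':R) • y + (t:R) • y')) ⊗ₜ[ℤ] (((t*t' : S) : R) • x₂))) =
      g0 R M₁ M₂ ((1 : S) : R) (g0 R M₁ M₂ (((t*t')*s₂ : S) : R)
        (g0 R M₁ M₂ ((t'*s₂ : S) : R) (((s₂:R) • y) ⊗ₜ[ℤ] ((t:R) • x₂)) +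
         g0 R M₁ M₂ ((t*s₂ : S) : R) (((s₂:R) • y') ⊗ₜ[ℤ] ((t':R) • x₂)))) := by
    simp only [OneMemClass.coe_one, map_one, Module.End.one_apply]
    rw [smul_add, add_tmul, map_add, map_add]
    simp only [hg]
    simp only [Submonoid.coe_mul, smul_smul]
    congr 1
    · refine tmul_congr _ _ ?_ ?_ <;> ring
    · refine tmul_congr _ _ ?_ ?_ <;> ring
  exact main

theorem bwdCore_add_right (hS : Grouplike S) (a : LocalizedModule S M₁)
    (b b' : LocalizedModule S M₂) :
    bwdCore hS a (b + b') = bwdCore hS a b + bwdCore hS a b' := by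
  letI : Module R (M₁ ⊗[ℤ] M₂) := diagModule R M₁ M₂
  induction b, b' using LocalizedModule.induction_on₂ with
  | _ x₂ x₂' s₂ s₂' =>
  induction a using LocalizedModule.induction_on with
  | _ y t =>
  rw [LocalizedModule.mk_add_mk, bwdCore_mk, bwdCore_mk, bwdCore_mk,
    LocalizedModule.mk_add_mk, LocalizedModule.mk_eq]
  refine ⟨1, ?_⟩
  have hg := fun (c : S) (z₁ : M₁) (z₂ : M₂) => g0_coe_tmul (M₁ := M₁) (M₂ := M₂) hS c z₁ z₂
  have main : g0 R M₁ M₂ ((1 : S) : R) (g0 R M₁ M₂ (((t*s₂)*(t*s₂') : S) : R)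
        ((((s₂*s₂' : S) : R) • y) ⊗ₜ[ℤ] ((t:R) • ((s₂':R) • x₂ + (s₂:R) • x₂')))) =
      g0 R M₁ M₂ ((1 : S) : R) (g0 R M₁ M₂ ((t*(s₂*s₂') : S) : R)
        (g0 R M₁ M₂ ((t*s₂' : S) : R) (((s₂:R) • y) ⊗ₜ[ℤ] ((t:R) • x₂)) +
         g0 R M₁ M₂ ((t*s₂ : S) : R) (((s₂':R) • y) ⊗ₜ[ℤ] ((t:R) • x₂')))) := by
    simp only [OneMemClass.coe_one, map_one, Module.End.one_apply]
    rw [smul_add, tmul_add, map_add, map_add]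
    simp only [hg]
    simp only [Submonoid.coe_mul, smul_smul]
    congr 1
    · refine tmul_congr _ _ ?_ ?_ <;> ring
    · refine tmul_congr _ _ ?_ ?_ <;> ring
  exact main

/-- The backward map, as a `ℤ`-linear map on the tensor product. -/
noncomputable def bwdLin (hS : Grouplike S) :
    (LocalizedModule S M₁ ⊗[ℤ] LocalizedModule S M₂) →ₗ[ℤ]
      (@LocalizedModule R _ S (M₁ ⊗[ℤ] M₂) _ (diagModule R M₁ M₂)) := by
  letI : Module R (M₁ ⊗[ℤ] M₂) := diagModule R M₁ M₂
  refine TensorProduct.lift (LinearMap.mk₂ ℤ (bwdCore hS)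
    (fun a a' b => bwdCore_add_left hS a a' b) ?_
    (fun a b b' => bwdCore_add_right hS a b b') ?_)
  · intro c a b
    exact map_zsmul (AddMonoidHom.mk' (fun a => bwdCore hS a b)
      (fun a a' => bwdCore_add_left hS a a' b)) c a
  · intro c a b
    exact map_zsmul (AddMonoidHom.mk' (fun b => bwdCore hS a b)
      (fun b b' => bwdCore_add_right hS a b b')) c b

theorem bwdLin_tmul (hS : Grouplike S) (a : LocalizedModule S M₁) (b : LocalizedModule S M₂) :
    bwdLin hS (a ⊗ₜ[ℤ] b) = bwdCore hS a b := rfl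

theorem fwd_add (hS : Grouplike S)
    (z z' : @LocalizedModule R _ S (M₁ ⊗[ℤ] M₂) _ (diagModule R M₁ M₂)) :
    fwd hS (z + z') = fwd hS z + fwd hS z' := by
  letI : Module R (M₁ ⊗[ℤ] M₂) := diagModule R M₁ M₂
  induction z, z' using LocalizedModule.induction_on₂ with
  | _ m m' s s' =>
  rw [LocalizedModule.mk_add_mk, fwd_mk, fwd_mk, fwd_mk, map_add]
  congr 1
  · rw [mul_comm s s']
    exact phi_g0 hS s' s m
  · exact phi_g0 hS s s' m'

theorem bwd_fwd (hS : Grouplike S)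
    (z : @LocalizedModule R _ S (M₁ ⊗[ℤ] M₂) _ (diagModule R M₁ M₂)) :
    bwdLin hS (fwd hS z) = z := by
  letI : Module R (M₁ ⊗[ℤ] M₂) := diagModule R M₁ M₂
  induction z using LocalizedModule.induction_on with
  | _ m s =>
  rw [fwd_mk]
  induction m using TensorProduct.induction_on with
  | zero =>
      rw [map_zero, map_zero]
      exact (LocalizedModule.zero_mk s).symm
  | tmul x₁ x₂ =>
      rw [phi_tmul]
      calc bwdLin hS (LocalizedModule.mk x₁ s ⊗ₜ[ℤ] LocalizedModule.mk x₂ s)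
          = bwdCore hS (LocalizedModule.mk x₁ s) (LocalizedModule.mk x₂ s) :=
            bwdLin_tmul hS _ _
        _ = LocalizedModule.mk (((s:R) • x₁) ⊗ₜ[ℤ] ((s:R) • x₂)) (s*s) :=
            bwdCore_mk hS x₁ s x₂ s
        _ = LocalizedModule.mk (g0 R M₁ M₂ ((s : S) : R) (x₁ ⊗ₜ[ℤ] x₂)) (s*s) := by
            rw [g0_coe_tmul hS]
        _ = LocalizedModule.mk (x₁ ⊗ₜ[ℤ] x₂) s :=
            LocalizedModule.mk_cancel_common_left s s _
  | add a b ha hb =>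
      rw [map_add, map_add, ha, hb]
      exact (map_add (lmk (M := M₁ ⊗[ℤ] M₂) s) a b).symm

theorem fwd_bwd (hS : Grouplike S)
    (t : LocalizedModule S M₁ ⊗[ℤ] LocalizedModule S M₂) :
    fwd hS (bwdLin hS t) = t := by
  letI : Module R (M₁ ⊗[ℤ] M₂) := diagModule R M₁ M₂
  induction t using TensorProduct.induction_on with
  | zero =>
      rw [map_zero]
      exact (congrArg (fwd hS) (LocalizedModule.zero_mk (M := M₁ ⊗[ℤ] M₂) (1 : S)).symm).trans
        ((fwd_mk hS 0 1).trans (map_zero (phi (S := S) (M₁ := M₁) (M₂ := M₂) 1)))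
  | tmul a b =>
      induction a using LocalizedModule.induction_on with
      | _ x₁ s₁ =>
      induction b using LocalizedModule.induction_on with
      | _ x₂ s₂ =>
      calc fwd hS (bwdLin hS (LocalizedModule.mk x₁ s₁ ⊗ₜ[ℤ] LocalizedModule.mk x₂ s₂))
          = fwd hS (LocalizedModule.mk (((s₂:R) • x₁) ⊗ₜ[ℤ] ((s₁:R) • x₂)) (s₁*s₂)) := by
            rw [bwdLin_tmul, bwdCore_mk]
        _ = phi (s₁*s₂) (((s₂:R) • x₁) ⊗ₜ[ℤ] ((s₁:R) • x₂)) := fwd_mk hS _ _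
        _ = LocalizedModule.mk ((s₂:R) • x₁) (s₁*s₂) ⊗ₜ[ℤ]
              LocalizedModule.mk ((s₁:R) • x₂) (s₁*s₂) := phi_tmul _ _ _
        _ = LocalizedModule.mk x₁ s₁ ⊗ₜ[ℤ] LocalizedModule.mk x₂ s₂ := by
            rw [← Submonoid.smul_def, ← Submonoid.smul_def,
              LocalizedModule.mk_cancel_common_right, LocalizedModule.mk_cancel_common_left]
  | add t t' h h' =>
      rw [map_add, fwd_add hS, h, h']

end Bwd

/-- For a commutative ring `R` which is a bialgebra over `ℤ` and a multiplicative set `S` of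
grouplike elements (`Δ(s) = s ⊗ s`), localization at `S` commutes with tensor product over `ℤ`
(the tensor product carrying the diagonal `R`-action via `Δ`): the canonical map
`S⁻¹(M₁ ⊗ M₂) → S⁻¹M₁ ⊗ S⁻¹M₂` is an isomorphism of abelian groups, with inverse sending
`(x₁/s₁) ⊗ (x₂/s₂)` to `(1/(s₁s₂))·(s₂x₁ ⊗ s₁x₂)`. -/
theorem statement9 (R : Type*) [CommRing R] [Bialgebra ℤ R] (S : Submonoid R)
    (hS : ∀ s ∈ S, Bialgebra.comulAlgHom ℤ R s =
      @TensorProduct.tmul ℤ _ R R _ _ Algebra.toModule Algebra.toModule s s)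
    (M₁ M₂ : Type*) [AddCommGroup M₁] [Module R M₁] [AddCommGroup M₂] [Module R M₂] :
    letI : Module R (M₁ ⊗[ℤ] M₂) := diagModule R M₁ M₂
    letI : DistribMulAction R (M₁ ⊗[ℤ] M₂) := Module.toDistribMulAction
    ∃ e : LocalizedModule S (M₁ ⊗[ℤ] M₂) ≃+
        (LocalizedModule S M₁ ⊗[ℤ] LocalizedModule S M₂),
      (∀ (x₁ : M₁) (x₂ : M₂) (s : S),
        e (LocalizedModule.mk (x₁ ⊗ₜ[ℤ] x₂) s) =
          LocalizedModule.mk x₁ s ⊗ₜ[ℤ] LocalizedModule.mk x₂ s) ∧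
      ∀ (x₁ : M₁) (x₂ : M₂) (s₁ s₂ : S),
        e.symm (LocalizedModule.mk x₁ s₁ ⊗ₜ[ℤ] LocalizedModule.mk x₂ s₂) =
          LocalizedModule.mk (((s₂ : R) • x₁) ⊗ₜ[ℤ] ((s₁ : R) • x₂)) (s₁ * s₂) := by
  letI : Module R (M₁ ⊗[ℤ] M₂) := diagModule R M₁ M₂
  letI : DistribMulAction R (M₁ ⊗[ℤ] M₂) := Module.toDistribMulAction
  refine ⟨AddEquiv.mk' (Equiv.mk (fwd hS) (bwdLin hS) (bwd_fwd hS) (fwd_bwd hS)) (fwd_add hS),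
    fun x₁ x₂ s => ?_, fun x₁ x₂ s₁ s₂ => ?_⟩
  · exact fwd_mk hS (x₁ ⊗ₜ[ℤ] x₂) s
  · exact (bwdLin_tmul hS _ _).trans (bwdCore_mk hS x₁ s₁ x₂ s₂)
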